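/- arXiv:1503.01854 — 2 statements merged into one kernel-verified Lean document; each statement's English description precedes it below -/
import Mathlib

section
/- Let w : ℝⁿ → ℝ be a differentiable choice welfare function (monotone, translation invariant, convex) and let V(x) = sup_{y ∈ ℝⁿ} { yᵀx − w(y) } be its convex conjugate. Then for every μ ∈ ℝⁿ, the gradient ∇w(μ) lies in the simplex Δ_{n−1}, satisfies w(μ) = μᵀ∇w(μ) − V(∇w(μ)), and is the unique maximizer of x ↦ μᵀx − V(x) over Δ_{n−1}. -/
open scoped BigOperators
open MeasureTheory

noncomputable section

/-- The simplex Δ_{n-1} in ℝⁿ. -/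
def choiceSimplex (n : ℕ) : Set (Fin n → ℝ) :=
  {x | (∀ i, 0 ≤ x i) ∧ ∑ i, x i = 1}

/-- A choice welfare function: monotone, translation invariant, convex. -/
def IsCWF {n : ℕ} (w : (Fin n → ℝ) → ℝ) : Prop :=
  (∀ μ₁ μ₂ : Fin n → ℝ, μ₂ ≤ μ₁ → w μ₂ ≤ w μ₁) ∧
  (∀ (μ : Fin n → ℝ) (t : ℝ), w (μ + fun _ => t) = w μ + t) ∧
  ConvexOn ℝ Set.univ w

/-- The convex conjugate V(x) = sup_y { yᵀx − w(y) }, valued in ℝ ∪ {+∞}. -/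
def conjFn {n : ℕ} (w : (Fin n → ℝ) → ℝ) (x : Fin n → ℝ) : EReal :=
  ⨆ y : Fin n → ℝ, ((∑ i, y i * x i - w y : ℝ) : EReal)

/-- The gradient of w at μ, whose i-th component is the partial derivative ∂w/∂μᵢ. -/
def grad {n : ℕ} (w : (Fin n → ℝ) → ℝ) (μ : Fin n → ℝ) : Fin n → ℝ :=
  fun i => fderiv ℝ w μ (Pi.single i 1)

/-! Convexity gives the gradient inequality `w y ≥ w μ + ∇w(μ)ᵀ(y - μ)`, which says that `μ`
attains the supremum defining `V(∇w(μ))`; this is the Fenchel–Young equality. Conversely, any `x`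
with `μᵀx - V(x) = w(μ)` is a subgradient of `w` at `μ`, and the only subgradient of a function
differentiable at `μ` is its gradient. Monotonicity makes the partial derivatives nonnegative, and
translation invariance forces the derivative along the all-ones vector to be `1`. -/

section Calculus

variable {E : Type*} [NormedAddCommGroup E] [NormedSpace ℝ E] {f : E → ℝ} {f' : E →L[ℝ] ℝ}
  {x : E}

theorem ConvexOn.apply_sub_le_of_hasFDerivAt (hf : ConvexOn ℝ Set.univ f)
    (hf' : HasFDerivAt f f' x) (y : E) : f' (y - x) ≤ f y - f x := by
  have hline : ConvexOn ℝ Set.univ (f ∘ AffineMap.lineMap (k := ℝ) x y) := by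
    simpa using hf.comp_affineMap (AffineMap.lineMap (k := ℝ) x y)
  have hderiv : HasDerivAt (f ∘ AffineMap.lineMap (k := ℝ) x y) (f' (y - x)) 0 := by
    simpa [HasLineDerivAt, Function.comp_def, AffineMap.lineMap_apply_module', add_comm]
      using hf'.hasLineDerivAt (y - x)
  simpa [slope_def_field] using
    hline.le_slope_of_hasDerivAt (Set.mem_univ 0) (Set.mem_univ 1) one_pos hderiv

theorem HasFDerivAt.eq_of_forall_le_sub (hf' : HasFDerivAt f f' x) {ℓ : E →L[ℝ] ℝ}
    (hℓ : ∀ y, ℓ (y - x) ≤ f y - f x) : f' = ℓ := by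
  have hmin : IsLocalMin (fun y => f y - ℓ y) x :=
    Filter.Eventually.of_forall fun y => by
      have := hℓ y
      rw [map_sub] at this
      linarith
  exact sub_eq_zero.mp (hmin.hasFDerivAt_eq_zero (hf'.sub ℓ.hasFDerivAt))

theorem HasFDerivAt.apply_eq_one_of_add_smul_eq (hf' : HasFDerivAt f f' x) {v : E}
    (hv : ∀ t : ℝ, f (x + t • v) = f x + t) : f' v = 1 := by
  have hline : HasLineDerivAt ℝ f 1 x v := by
    simpa [HasLineDerivAt, hv] using (hasDerivAt_id (0 : ℝ)).const_add (f x)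
  exact (hf'.hasLineDerivAt v).unique hline

end Calculus

section Welfare

variable {n : ℕ} {w : (Fin n → ℝ) → ℝ} {μ : Fin n → ℝ}

theorem fderiv_apply_eq_sum_grad (w : (Fin n → ℝ) → ℝ) (μ v : Fin n → ℝ) :
    fderiv ℝ w μ v = ∑ i, v i * grad w μ i := by
  conv_lhs => rw [← Finset.univ_sum_single v]
  refine (map_sum _ _ _).trans (Finset.sum_congr rfl fun i _ => ?_)
  rw [grad, ← smul_eq_mul, ← map_smul, ← Pi.single_smul', smul_eq_mul, mul_one]

theorem grad_nonneg (hw : Monotone w) (hμ : DifferentiableAt ℝ w μ) (i : Fin n) :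
    0 ≤ grad w μ i := by
  have hline : HasDerivAt (fun t : ℝ => w (μ + t • Pi.single i 1)) (grad w μ i) 0 :=
    hμ.hasFDerivAt.hasLineDerivAt _
  rw [← hline.deriv]
  refine Monotone.deriv_nonneg fun s t hst => hw ?_
  have hei : (0 : Fin n → ℝ) ≤ Pi.single i 1 := Pi.single_nonneg.mpr zero_le_one
  gcongr

theorem sum_grad_eq_one (htrans : ∀ (μ : Fin n → ℝ) (t : ℝ), w (μ + fun _ => t) = w μ + t)
    (hμ : DifferentiableAt ℝ w μ) : ∑ i, grad w μ i = 1 := by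
  have := hμ.hasFDerivAt.apply_eq_one_of_add_smul_eq (v := fun _ => 1) fun t => by
    rw [← htrans μ t]
    congr 2
    ext
    simp
  simpa [fderiv_apply_eq_sum_grad] using this

theorem le_conjFn (w : (Fin n → ℝ) → ℝ) (x y : Fin n → ℝ) :
    ((∑ i, y i * x i - w y : ℝ) : EReal) ≤ conjFn w x :=
  le_iSup (fun y => ((∑ i, y i * x i - w y : ℝ) : EReal)) y

theorem sub_conjFn_le (w : (Fin n → ℝ) → ℝ) (μ x : Fin n → ℝ) :
    ((∑ i, μ i * x i : ℝ) : EReal) - conjFn w x ≤ (w μ : EReal) :=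
  calc ((∑ i, μ i * x i : ℝ) : EReal) - conjFn w x
      ≤ ((∑ i, μ i * x i : ℝ) : EReal) - ((∑ i, μ i * x i - w μ : ℝ) : EReal) :=
        EReal.sub_le_sub le_rfl (le_conjFn w x μ)
    _ = (w μ : EReal) := by rw [← EReal.coe_sub, sub_sub_cancel]

theorem conjFn_eq_of_forall_le {x : Fin n → ℝ}
    (hx : ∀ y, ∑ i, y i * x i - w y ≤ ∑ i, μ i * x i - w μ) :
    conjFn w x = ((∑ i, μ i * x i - w μ : ℝ) : EReal) :=
  le_antisymm (iSup_le fun y => EReal.coe_le_coe_iff.mpr (hx y)) (le_conjFn w x μ)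

theorem forall_le_of_sub_conjFn_eq {x : Fin n → ℝ}
    (hx : ((∑ i, μ i * x i : ℝ) : EReal) - conjFn w x = (w μ : EReal)) :
    ∀ y, ∑ i, y i * x i - w y ≤ ∑ i, μ i * x i - w μ := by
  intro y
  have hy := le_conjFn w x y
  induction h : conjFn w x using EReal.rec with
  | bot => rw [h] at hy; exact absurd hy (not_le.mpr (EReal.bot_lt_coe _))
  | top => rw [h, EReal.sub_top] at hx; exact absurd hx (EReal.bot_ne_coe _)
  | coe v =>
    rw [h, ← EReal.coe_sub, EReal.coe_eq_coe_iff] at hx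
    rw [h, EReal.coe_le_coe_iff] at hy
    linarith

theorem sum_mul_grad_sub_le (hc : ConvexOn ℝ Set.univ w) (hμ : DifferentiableAt ℝ w μ)
    (y : Fin n → ℝ) : ∑ i, y i * grad w μ i - w y ≤ ∑ i, μ i * grad w μ i - w μ := by
  have := hc.apply_sub_le_of_hasFDerivAt hμ.hasFDerivAt y
  simp only [fderiv_apply_eq_sum_grad, Pi.sub_apply, sub_mul, Finset.sum_sub_distrib] at this
  linarith

theorem eq_grad_of_forall_le (hμ : DifferentiableAt ℝ w μ) {x : Fin n → ℝ}
    (hx : ∀ y, ∑ i, y i * x i - w y ≤ ∑ i, μ i * x i - w μ) : x = grad w μ := by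
  have hderiv := hμ.hasFDerivAt.eq_of_forall_le_sub
    (ℓ := ∑ i, x i • ContinuousLinearMap.proj i) fun y => by
      have := hx y
      simp only [_root_.sum_apply, _root_.smul_apply, ContinuousLinearMap.proj_apply,
        smul_eq_mul, Pi.sub_apply, mul_comm (x _), sub_mul, Finset.sum_sub_distrib]
      linarith
  funext i
  simp [grad, hderiv, Pi.single_apply]

end Welfare

theorem stmt_5_general (n : ℕ) (w : (Fin n → ℝ) → ℝ)
    (hw : IsCWF w) (hdiff : Differentiable ℝ w) (μ : Fin n → ℝ) :
    grad w μ ∈ choiceSimplex n ∧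
    (w μ : EReal) = ((∑ i, μ i * grad w μ i : ℝ) : EReal) - conjFn w (grad w μ) ∧
    (∀ x ∈ choiceSimplex n,
      ((∑ i, μ i * x i : ℝ) : EReal) - conjFn w x ≤ (w μ : EReal)) ∧
    (∀ x ∈ choiceSimplex n,
      ((∑ i, μ i * x i : ℝ) : EReal) - conjFn w x = (w μ : EReal) → x = grad w μ) := by
  obtain ⟨hmono, htrans, hconv⟩ := hw
  have hμ := hdiff μ
  have hsimplex : grad w μ ∈ choiceSimplex n :=
    ⟨grad_nonneg (fun a b h => hmono b a h) hμ, sum_grad_eq_one htrans hμ⟩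
  have hconj := conjFn_eq_of_forall_le (sum_mul_grad_sub_le hconv hμ)
  refine ⟨hsimplex, ?_, fun x _ => sub_conjFn_le w μ x,
    fun x _ hx => eq_grad_of_forall_le hμ (forall_le_of_sub_conjFn_eq hx)⟩
  rw [hconj, ← EReal.coe_sub, sub_sub_cancel]

theorem stmt_5 (n : ℕ) (hn : 1 ≤ n) (w : (Fin n → ℝ) → ℝ)
    (hw : IsCWF w) (hdiff : Differentiable ℝ w) (μ : Fin n → ℝ) :
    grad w μ ∈ choiceSimplex n ∧
    (w μ : EReal) = ((∑ i, μ i * grad w μ i : ℝ) : EReal) - conjFn w (grad w μ) ∧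
    (∀ x ∈ choiceSimplex n,
      ((∑ i, μ i * x i : ℝ) : EReal) - conjFn w x ≤ (w μ : EReal)) ∧
    (∀ x ∈ choiceSimplex n,
      ((∑ i, μ i * x i : ℝ) : EReal) - conjFn w x = (w μ : EReal) → x = grad w μ) :=
  stmt_5_general n w hw hdiff μ
end
end

section
/- Let w : ℝⁿ → ℝ be a differentiable choice welfare function (monotone, translation invariant, convex) such that q(μ) = ∇w(μ) is a substitutable choice model, and let V(x) = sup_{y ∈ ℝⁿ} { yᵀx − w(y) } be the convex conjugate of w. Then for every i ∈ {1,…,n}, the function V̄_i : ℝ^{n−1} → ℝ ∪ {+∞} defined by V̄_i(z) = V(z₁,…,z_{i−1}, 1 − Σ_{j=1}^{n−1} z_j, z_i,…,z_{n−1}) if z ≥ 0 and Σ_j z_j ≤ 1, and V̄_i(z) = +∞ otherwise, is supermodular on ℝ^{n−1}. -/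
open scoped BigOperators
open MeasureTheory

noncomputable section

/-- V̄ᵢ(z) = V(z₁,…,z_{i−1}, 1 − Σⱼ zⱼ, z_i,…,z_{n−1}) on the feasible region, +∞ outside. -/
def Vbar {n : ℕ} (V : (Fin (n + 1) → ℝ) → EReal) (i : Fin (n + 1))
    (z : Fin n → ℝ) : EReal :=
  if (∀ j, 0 ≤ z j) ∧ ∑ j, z j ≤ 1 then V (i.insertNth (1 - ∑ j, z j) z) else ⊤

/- ### Auxiliary lemmas -/

/-- Rearrangement inequality for two pairs. -/
lemma rearr_aux (a b p q : ℝ) : a * p + b * q ≤ (a ⊔ b) * (p ⊔ q) + (a ⊓ b) * (p ⊓ q) := by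
  rcases le_total a b with h | h <;> rcases le_total p q with h' | h' <;>
    simp only [sup_of_le_left, sup_of_le_right, inf_of_le_left, inf_of_le_right, h, h'] <;>
    nlinarith

lemma conjFn_ne_bot {n : ℕ} (w : (Fin n → ℝ) → ℝ) (x : Fin n → ℝ) : conjFn w x ≠ ⊥ := by
  intro hbot
  have h := le_iSup (fun y : Fin n → ℝ => ((∑ i, y i * x i - w y : ℝ) : EReal)) 0
  rw [show (⨆ y : Fin n → ℝ, ((∑ i, y i * x i - w y : ℝ) : EReal)) = conjFn w x from rfl,
    hbot] at h
  exact EReal.coe_ne_bot _ (le_bot_iff.mp h)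

lemma Vbar_ne_bot {n : ℕ} (w : (Fin (n + 1) → ℝ) → ℝ) (i : Fin (n + 1)) (z : Fin n → ℝ) :
    Vbar (conjFn w) i z ≠ ⊥ := by
  unfold Vbar
  split_ifs
  · exact conjFn_ne_bot w _
  · exact top_ne_bot

/-- iterated substitutability -/
lemma grad_add_le {n : ℕ} (w : (Fin (n + 1) → ℝ) → ℝ)
    (hsub : ∀ i j : Fin (n + 1), i ≠ j →
      ∀ (μ : Fin (n + 1) → ℝ) (t : ℝ), 0 < t →
        grad w (μ + t • (Pi.single i 1 : Fin (n + 1) → ℝ)) j ≤ grad w μ j)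
    (j : Fin (n + 1)) (μ c : Fin (n + 1) → ℝ) (hc : ∀ k, 0 ≤ c k) (hcj : c j = 0) :
    grad w (μ + c) j ≤ grad w μ j := by
  classical
  have key : ∀ S : Finset (Fin (n + 1)),
      grad w (μ + ∑ k ∈ S, Pi.single k (c k)) j ≤ grad w μ j := by
    intro S
    induction S using Finset.induction_on with
    | empty => simp
    | @insert k S hk IH =>
      rw [Finset.sum_insert hk]
      rcases (hc k).eq_or_lt with h0 | hpos
      · rw [← h0, Pi.single_zero, zero_add]; exact IH
      · have hkj : k ≠ j := by rintro rfl; rw [hcj] at hpos; exact lt_irrefl _ hpos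
        have hsingle : (c k) • (Pi.single k 1 : Fin (n + 1) → ℝ) = Pi.single k (c k) := by
          funext m
          by_cases hm : m = k <;> simp [Pi.single_apply, hm]
        have := hsub k j hkj (μ + ∑ k ∈ S, Pi.single k (c k)) (c k) hpos
        rw [hsingle] at this
        calc grad w (μ + (Pi.single k (c k) + ∑ x ∈ S, Pi.single x (c x))) j
            = grad w ((μ + ∑ x ∈ S, Pi.single x (c x)) + Pi.single k (c k)) j := by
              rw [show μ + (Pi.single k (c k) + ∑ x ∈ S, Pi.single x (c x)) =
                μ + ∑ x ∈ S, Pi.single x (c x) + Pi.single k (c k) from by abel]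
          _ ≤ grad w (μ + ∑ x ∈ S, Pi.single x (c x)) j := this
          _ ≤ grad w μ j := IH
  have hc' : c = ∑ k, Pi.single k (c k) := by
    funext m
    rw [Finset.sum_apply]
    simp [Pi.single_apply]
  rw [hc']
  exact key Finset.univ

lemma fderiv_apply_eq {n : ℕ} (w : (Fin (n + 1) → ℝ) → ℝ) (μ d : Fin (n + 1) → ℝ) :
    (fderiv ℝ w μ) d = ∑ j, d j * grad w μ j := by
  classical
  have hd : d = ∑ j, d j • (Pi.single j 1 : Fin (n + 1) → ℝ) := by
    funext m
    rw [Finset.sum_apply]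
    simp [Pi.single_apply]
  conv_lhs => rw [hd]
  rw [map_sum]
  refine Finset.sum_congr rfl fun j _ => ?_
  rw [(fderiv ℝ w μ).map_smul, smul_eq_mul]
  rfl

/-- Submodularity of w from substitutability. -/
lemma w_submod {n : ℕ} (w : (Fin (n + 1) → ℝ) → ℝ) (hdiff : Differentiable ℝ w)
    (hsub : ∀ i j : Fin (n + 1), i ≠ j →
      ∀ (μ : Fin (n + 1) → ℝ) (t : ℝ), 0 < t →
        grad w (μ + t • (Pi.single i 1 : Fin (n + 1) → ℝ)) j ≤ grad w μ j)
    (x y : Fin (n + 1) → ℝ) :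
    w (x ⊔ y) + w (x ⊓ y) ≤ w x + w y := by
  set a := x ⊓ y with ha
  set c := y - a with hcdef
  set d := x - a with hddef
  have hc : ∀ k, 0 ≤ c k := by
    intro k; simp only [hcdef, Pi.sub_apply, ha, Pi.inf_apply, sub_nonneg]; exact inf_le_right
  have hd : ∀ k, 0 ≤ d k := by
    intro k; simp only [hddef, Pi.sub_apply, ha, Pi.inf_apply, sub_nonneg]; exact inf_le_left
  have hdisj : ∀ k, 0 < d k → c k = 0 := by
    intro k hk
    simp only [hddef, Pi.sub_apply, ha, Pi.inf_apply, sub_pos] at hk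
    rcases le_total (x k) (y k) with hle | hle
    · rw [inf_of_le_left hle] at hk; exact absurd hk (lt_irrefl _)
    · simp only [hcdef, Pi.sub_apply, ha, Pi.inf_apply, inf_of_le_right hle, sub_self]
  have line : ∀ (b : Fin (n + 1) → ℝ) (t : ℝ),
      HasDerivAt (fun s : ℝ => w (b + s • d)) ((fderiv ℝ w (b + t • d)) d) t := by
    intro b t
    have hl : HasDerivAt (fun s : ℝ => b + s • d) d t := by
      simpa using ((hasDerivAt_id t).smul_const d).const_add b
    exact (hdiff (b + t • d)).hasFDerivAt.comp_hasDerivAt t hl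
  set h : ℝ → ℝ := fun t => w ((a + c) + t • d) - w (a + t • d) with hh
  have hder : ∀ t : ℝ, HasDerivAt h
      ((fderiv ℝ w ((a + c) + t • d)) d - (fderiv ℝ w (a + t • d)) d) t :=
    fun t => (line (a + c) t).sub (line a t)
  have hE : ∀ t : ℝ, (fderiv ℝ w ((a + c) + t • d)) d - (fderiv ℝ w (a + t • d)) d ≤ 0 := by
    intro t
    rw [fderiv_apply_eq, fderiv_apply_eq, ← Finset.sum_sub_distrib]
    apply Finset.sum_nonpos
    intro k _
    rw [← mul_sub]
    rcases (hd k).eq_or_lt with h0 | hpos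
    · rw [← h0, zero_mul]
    · have hck : c k = 0 := hdisj k hpos
      have : grad w ((a + t • d) + c) k ≤ grad w (a + t • d) k :=
        grad_add_le w hsub k (a + t • d) c hc hck
      have heq : (a + c) + t • d = (a + t • d) + c := by abel
      rw [heq]
      exact mul_nonpos_of_nonneg_of_nonpos (le_of_lt hpos) (by linarith)
  have hanti : Antitone h :=
    antitone_of_deriv_nonpos (fun t => (hder t).differentiableAt)
      (fun t => by rw [(hder t).deriv]; exact hE t)
  have h10 : h 1 ≤ h 0 := hanti (by norm_num : (0:ℝ) ≤ 1)
  have hx : a + d = x := by rw [hddef]; abel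
  have hy : a + c = y := by rw [hcdef]; abel
  have hxy : (a + c) + d = x ⊔ y := by
    funext k
    simp only [Pi.add_apply, hcdef, hddef, Pi.sub_apply, ha, Pi.inf_apply, Pi.sup_apply]
    rcases le_total (x k) (y k) with hle | hle
    · rw [inf_of_le_left hle, sup_of_le_right hle]; ring
    · rw [inf_of_le_right hle, sup_of_le_left hle]; ring
  have e1 : h 1 = w (x ⊔ y) - w x := by
    simp only [hh, one_smul, hxy]
    rw [hx]
  have e0 : h 0 = w y - w a := by
    simp only [hh, zero_smul, add_zero, hy]
  rw [e1, e0] at h10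
  show w (x ⊔ y) + w a ≤ w x + w y
  linarith

/-- Sum of a sup of reals. -/
lemma isup_add_isup_le {ι κ : Type*} [Nonempty ι] [Nonempty κ] (f : ι → ℝ) (g : κ → ℝ)
    (C : EReal) (h : ∀ a b, ((f a + g b : ℝ) : EReal) ≤ C) :
    (⨆ a, ((f a : ℝ) : EReal)) + (⨆ b, ((g b : ℝ) : EReal)) ≤ C := by
  induction C using EReal.rec with
  | top => exact le_top
  | bot =>
    exfalso
    have := h (Classical.arbitrary ι) (Classical.arbitrary κ)
    exact EReal.coe_ne_bot _ (le_bot_iff.mp this)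
  | coe c =>
    have h' : ∀ a b, f a + g b ≤ c := fun a b => EReal.coe_le_coe_iff.mp (h a b)
    set A := ⨆ a, ((f a : ℝ) : EReal) with hA
    set B := ⨆ b, ((g b : ℝ) : EReal) with hB
    have a₀ : ι := Classical.arbitrary ι
    have b₀ : κ := Classical.arbitrary κ
    have hA_le : A ≤ ((c - g b₀ : ℝ) : EReal) :=
      iSup_le fun a => EReal.coe_le_coe_iff.mpr (by linarith [h' a b₀])
    have hB_le : B ≤ ((c - f a₀ : ℝ) : EReal) :=
      iSup_le fun b => EReal.coe_le_coe_iff.mpr (by linarith [h' a₀ b])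
    have hA_bot : A ≠ ⊥ := by
      intro e
      have := le_iSup (fun a => ((f a : ℝ) : EReal)) a₀
      rw [← hA, e] at this
      exact EReal.coe_ne_bot _ (le_bot_iff.mp this)
    have hB_bot : B ≠ ⊥ := by
      intro e
      have := le_iSup (fun b => ((g b : ℝ) : EReal)) b₀
      rw [← hB, e] at this
      exact EReal.coe_ne_bot _ (le_bot_iff.mp this)
    have hA_top : A ≠ ⊤ := ne_top_of_le_ne_top (EReal.coe_ne_top _) hA_le
    have hB_top : B ≠ ⊤ := ne_top_of_le_ne_top (EReal.coe_ne_top _) hB_le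
    have hα : ((A.toReal : ℝ) : EReal) = A := EReal.coe_toReal hA_top hA_bot
    have hβ : ((B.toReal : ℝ) : EReal) = B := EReal.coe_toReal hB_top hB_bot
    set α := A.toReal
    set β := B.toReal
    have hgb : ∀ a, β ≤ c - f a := by
      intro a
      have : B ≤ ((c - f a : ℝ) : EReal) :=
        iSup_le fun b => EReal.coe_le_coe_iff.mpr (by linarith [h' a b])
      rw [← hβ] at this
      exact EReal.coe_le_coe_iff.mp this
    have hfa : α ≤ c - β := by
      have : A ≤ ((c - β : ℝ) : EReal) :=
        iSup_le fun a => EReal.coe_le_coe_iff.mpr (by linarith [hgb a])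
      rw [← hα] at this
      exact EReal.coe_le_coe_iff.mp this
    calc A + B = ((α + β : ℝ) : EReal) := by rw [EReal.coe_add, hα, hβ]
      _ ≤ ((c : ℝ) : EReal) := EReal.coe_le_coe_iff.mpr (by linarith)

lemma sum_insertNth {n : ℕ} (i : Fin (n + 1)) (z : Fin n → ℝ) :
    ∑ j, (i.insertNth (1 - ∑ k, z k) z) j = 1 := by
  rw [Fin.sum_univ_succAbove _ i]
  simp [Fin.insertNth_apply_same, Fin.insertNth_apply_succAbove]

theorem stmt_14 (n : ℕ) (w : (Fin (n + 1) → ℝ) → ℝ)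
    (hw : IsCWF w) (hdiff : Differentiable ℝ w)
    (hsub : ∀ i j : Fin (n + 1), i ≠ j →
      ∀ (μ : Fin (n + 1) → ℝ) (t : ℝ), 0 < t →
        grad w (μ + t • (Pi.single i 1 : Fin (n + 1) → ℝ)) j ≤ grad w μ j) :
    ∀ i : Fin (n + 1), ∀ z₁ z₂ : Fin n → ℝ,
      Vbar (conjFn w) i z₁ + Vbar (conjFn w) i z₂ ≤
        Vbar (conjFn w) i (z₁ ⊔ z₂) + Vbar (conjFn w) i (z₁ ⊓ z₂) := by
  intro i z₁ z₂
  classical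
  by_cases hS : (∀ j, 0 ≤ (z₁ ⊔ z₂) j) ∧ ∑ j, (z₁ ⊔ z₂) j ≤ 1
  · by_cases hI : (∀ j, 0 ≤ (z₁ ⊓ z₂) j) ∧ ∑ j, (z₁ ⊓ z₂) j ≤ 1
    · -- the main case: all four feasible
      have hz₁ : (∀ j, 0 ≤ z₁ j) ∧ ∑ j, z₁ j ≤ 1 :=
        ⟨fun j => (hI.1 j).trans inf_le_left,
          le_trans (Finset.sum_le_sum fun j _ => (le_sup_left : z₁ j ≤ (z₁ ⊔ z₂) j)) hS.2⟩
      have hz₂ : (∀ j, 0 ≤ z₂ j) ∧ ∑ j, z₂ j ≤ 1 :=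
        ⟨fun j => (hI.1 j).trans inf_le_right,
          le_trans (Finset.sum_le_sum fun j _ => (le_sup_right : z₂ j ≤ (z₁ ⊔ z₂) j)) hS.2⟩
      unfold Vbar
      rw [if_pos hz₁, if_pos hz₂, if_pos hS, if_pos hI]
      set X₁ : Fin (n+1) → ℝ := i.insertNth (1 - ∑ j, z₁ j) z₁ with hX₁
      set X₂ : Fin (n+1) → ℝ := i.insertNth (1 - ∑ j, z₂ j) z₂ with hX₂
      set Xs : Fin (n+1) → ℝ := i.insertNth (1 - ∑ j, (z₁ ⊔ z₂) j) (z₁ ⊔ z₂) with hXs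
      set Xi : Fin (n+1) → ℝ := i.insertNth (1 - ∑ j, (z₁ ⊓ z₂) j) (z₁ ⊓ z₂) with hXi
      show (⨆ y : Fin (n+1) → ℝ, ((∑ j, y j * X₁ j - w y : ℝ) : EReal)) +
          (⨆ y : Fin (n+1) → ℝ, ((∑ j, y j * X₂ j - w y : ℝ) : EReal)) ≤
          conjFn w Xs + conjFn w Xi
      apply isup_add_isup_le
      intro y₁ y₂
      -- normalized versions
      set yn₁ : Fin (n + 1) → ℝ := fun j => y₁ j - y₁ i with hyn₁
      set yn₂ : Fin (n + 1) → ℝ := fun j => y₂ j - y₂ i with hyn₂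
      set u := yn₁ ⊔ yn₂ with hu
      set v := yn₁ ⊓ yn₂ with hv
      have norm_step : ∀ (y : Fin (n + 1) → ℝ) (x : Fin (n + 1) → ℝ), (∑ j, x j = 1) →
          ∑ j, y j * x j - w y = ∑ j, (fun j => y j - y i) j * x j - w (fun j => y j - y i) := by
        intro y x hx
        have h1 : ∑ j, (y j - y i) * x j = ∑ j, y j * x j - y i := by
          simp only [sub_mul]
          rw [Finset.sum_sub_distrib, ← Finset.mul_sum, hx, mul_one]
        have h2 : w (fun j => y j - y i) = w y - y i := by
          have : (fun j => y j - y i) = y + fun _ => -(y i) := by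
            funext j; simp [sub_eq_add_neg]
          rw [this, hw.2.1 y (-(y i))]
          ring
        rw [h1, h2]
        ring
      have hy₁i : yn₁ i = 0 := by simp [hyn₁]
      have hy₂i : yn₂ i = 0 := by simp [hyn₂]
      -- the key real inequality
      have key : (∑ j, y₁ j * X₁ j - w y₁) + (∑ j, y₂ j * X₂ j - w y₂) ≤
          (∑ j, u j * Xs j - w u) + (∑ j, v j * Xi j - w v) := by
        rw [norm_step y₁ X₁ (sum_insertNth i z₁), norm_step y₂ X₂ (sum_insertNth i z₂)]
        have hsubw : w u + w v ≤ w yn₁ + w yn₂ := w_submod w hdiff hsub yn₁ yn₂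
        have hsums : ∑ j, yn₁ j * X₁ j + ∑ j, yn₂ j * X₂ j ≤
            ∑ j, u j * Xs j + ∑ j, v j * Xi j := by
          rw [Fin.sum_univ_succAbove (fun j => yn₁ j * X₁ j) i,
            Fin.sum_univ_succAbove (fun j => yn₂ j * X₂ j) i,
            Fin.sum_univ_succAbove (fun j => u j * Xs j) i,
            Fin.sum_univ_succAbove (fun j => v j * Xi j) i]
          have hui : u i = 0 := by simp [hu, Pi.sup_apply, hy₁i, hy₂i]
          have hvi : v i = 0 := by simp [hv, Pi.inf_apply, hy₁i, hy₂i]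
          rw [hy₁i, hy₂i, hui, hvi]
          simp only [zero_mul, zero_add]
          rw [← Finset.sum_add_distrib, ← Finset.sum_add_distrib]
          apply Finset.sum_le_sum
          intro k _
          rw [hX₁, hX₂, hXs, hXi, Fin.insertNth_apply_succAbove, Fin.insertNth_apply_succAbove,
            Fin.insertNth_apply_succAbove, Fin.insertNth_apply_succAbove]
          have h1 : u (i.succAbove k) = yn₁ (i.succAbove k) ⊔ yn₂ (i.succAbove k) := rfl
          have h2 : v (i.succAbove k) = yn₁ (i.succAbove k) ⊓ yn₂ (i.succAbove k) := rfl
          have h3 : (z₁ ⊔ z₂) k = z₁ k ⊔ z₂ k := rfl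
          have h4 : (z₁ ⊓ z₂) k = z₁ k ⊓ z₂ k := rfl
          rw [h1, h2, h3, h4]
          exact rearr_aux _ _ _ _
        linarith
      calc ((((∑ j, y₁ j * X₁ j - w y₁) + (∑ j, y₂ j * X₂ j - w y₂) : ℝ)) : EReal)
          ≤ (((∑ j, u j * Xs j - w u) + (∑ j, v j * Xi j - w v) : ℝ) : EReal) :=
            EReal.coe_le_coe_iff.mpr key
        _ = ((∑ j, u j * Xs j - w u : ℝ) : EReal) + ((∑ j, v j * Xi j - w v : ℝ) : EReal) :=
            EReal.coe_add _ _
        _ ≤ conjFn w Xs + conjFn w Xi :=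
            add_le_add (le_iSup (fun y => ((∑ j, y j * Xs j - w y : ℝ) : EReal)) u)
              (le_iSup (fun y => ((∑ j, y j * Xi j - w y : ℝ) : EReal)) v)
    · -- z₁ ⊓ z₂ infeasible: RHS = ⊤
      have : Vbar (conjFn w) i (z₁ ⊓ z₂) = ⊤ := by unfold Vbar; exact if_neg hI
      rw [this, EReal.add_top_of_ne_bot (Vbar_ne_bot w i _)]
      exact le_top
  · -- z₁ ⊔ z₂ infeasible: RHS = ⊤
    have : Vbar (conjFn w) i (z₁ ⊔ z₂) = ⊤ := by unfold Vbar; exact if_neg hS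
    rw [this, EReal.top_add_of_ne_bot (Vbar_ne_bot w i _)]
    exact le_top
end
end
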